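/- The padded Hadamard code locally decodes against prefix-deletion (type-1) errors: fix integers t ≥ 2, n ≥ 1, δ ∈ [0,1], x ∈ {0,1}^n, an index 0 ≤ i ≤ n−1, and an integer e with 0 ≤ e ≤ δ·2^{tn}. Let y : {0, …, 2^{tn} − 1} → {0,1} be any string such that y(a) = f_{x^{(t)}}(a + e) whenever a + e ≤ 2^{tn} − 1 (the remaining values of y are arbitrary). Then, for a chosen uniformly at random from {0, 1, …, 2^{tn} − 2^{ti} − 1}, Pr[y(a) ⊕ y(a + 2^{ti}) = x_i] ≥ 1 − δ − 2^{−t+1}. In particular, the encoding x ↦ (f_{x^{(t)}}(a))_{a=0}^{2^{tn}−1} of length m = 2^{tn} together with the 2-query decoder outputting y(a) ⊕ y(a + 2^{ti}) is a (2, δ, 1/2 − δ − 2^{−t+1}) locally decodable code for errors that delete a prefix of at most δ·2^{tn} symbols of the codeword and append arbitrary symbols at the end. -/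

import Mathlib

open scoped Classical

/-- `hadF tn z a` is the Hadamard-code bit `⊕_{j<tn} a_j·z_j`, where `a_j` are the
binary digits of `a`: the inner product mod 2 of the digit vector of `a` with `z`. -/
def hadF (tn : ℕ) (z : ℕ → Bool) (a : ℕ) : Bool :=
  decide ((((Finset.range tn).filter fun j => a.testBit j && z j).card) % 2 = 1)

/-- `paddedMsg t n x` is the string `x^(t) ∈ {0,1}^(tn)`: each bit of `x` followed by
`t − 1` zeros, so that bit `t·i` equals `x i` and all other bits are `0` (viewed as a
function on `ℕ`, zero outside the relevant range). -/
def paddedMsg (t n : ℕ) (x : Fin n → Bool) : ℕ → Bool := fun j =>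
  if h : j % t = 0 ∧ j / t < n then x ⟨j / t, h.2⟩ else false

/-- `a` is *good* for `i` if it is **not** the case that all binary digits `a_j` with
`t·i ≤ j ≤ t·(i+1) − 1` equal `1`. -/
def goodFor (t i a : ℕ) : Prop :=
  ¬ ∀ j ∈ Finset.Ico (t * i) (t * (i + 1)), a.testBit j = true

/-!
Write `b = a + e`. If `b + 2 ^ (t i) < 2 ^ (t n)`, both queries read genuine codeword symbols, so
the decoder returns `f(b) ⊕ f(b + 2 ^ (t i))`. If moreover the block of bits `t i, …, t i + t - 1`
of `b` is not all ones, adding `2 ^ (t i)` flips bit `t i` and the carry stays inside the block;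
as `x^(t)` vanishes on the block except at `t i`, the two Hadamard values differ by exactly `x i`.
So the decoder can only fail for the at most `e` values of `a` pushed past the end, and for the
`b < 2 ^ (t n) - 2 ^ (t i)` whose block is all ones, of which there are at most
`2 ^ (t n - t) - 2 ^ (t i)`.
-/

open Finset

namespace Nat

lemma testBit_succ_of_mod_two_pow_ne {q t k : ℕ} (hq : q % 2 ^ t ≠ 2 ^ t - 1) (hk : t ≤ k) :
    (q + 1).testBit k = q.testBit k := by
  have hlt : q % 2 ^ t + 1 < 2 ^ t := by have := Nat.mod_lt q (Nat.two_pow_pos t); omega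
  have hq' : q + 1 = 2 ^ t * (q / 2 ^ t) + (q % 2 ^ t + 1) := by rw [← add_assoc, Nat.div_add_mod]
  rw [hq', testBit_two_pow_mul_add _ hlt, ← Nat.div_add_mod q (2 ^ t),
    testBit_two_pow_mul_add _ (Nat.mod_lt _ (Nat.two_pow_pos t)), if_neg hk.not_gt,
    if_neg hk.not_gt, Nat.div_add_mod]

lemma testBit_add_two_pow_of_lt_or_le {b s t j : ℕ} (hb : b / 2 ^ s % 2 ^ t ≠ 2 ^ t - 1)
    (hj : j < s ∨ s + t ≤ j) : (b + 2 ^ s).testBit j = b.testBit j := by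
  have hr := Nat.mod_lt b (Nat.two_pow_pos s)
  have hsplit : b + 2 ^ s = 2 ^ s * (b / 2 ^ s + 1) + b % 2 ^ s := by
    rw [mul_add_one, add_right_comm, Nat.div_add_mod]
  rw [hsplit, testBit_two_pow_mul_add _ hr]
  conv_rhs => rw [← Nat.div_add_mod b (2 ^ s), testBit_two_pow_mul_add _ hr]
  split_ifs with hjs
  · rfl
  · exact testBit_succ_of_mod_two_pow_ne hb (by omega)

end Nat

lemma goodFor_iff_div_mod_ne {t i b : ℕ} :
    goodFor t i b ↔ b / 2 ^ (t * i) % 2 ^ t ≠ 2 ^ t - 1 := by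
  refine not_congr ⟨fun h => Nat.eq_of_testBit_eq fun k => ?_, fun h j hj => ?_⟩
  · rw [Nat.testBit_mod_two_pow, Nat.testBit_div_two_pow, Nat.testBit_two_pow_sub_one]
    by_cases hk : k < t
    · simp [hk, h (k + t * i) (by rw [Finset.mem_Ico]; constructor <;> nlinarith)]
    · simp [hk]
  · rw [Finset.mem_Ico, mul_add_one] at hj
    have := congrArg (Nat.testBit · (j - t * i)) h
    simp only [Nat.testBit_mod_two_pow, Nat.testBit_div_two_pow, Nat.testBit_two_pow_sub_one,
      Nat.sub_add_cancel hj.1] at this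
    simpa [show j - t * i < t by omega] using this

lemma xor_hadF_of_testBit_flip {tn p b b' : ℕ} {z : ℕ → Bool} (hp : p < tn)
    (hflip : b'.testBit p = !b.testBit p)
    (hagree : ∀ j < tn, j ≠ p → z j = true → b'.testBit j = b.testBit j) :
    xor (hadF tn z b) (hadF tn z b') = z p := by
  have hsplit : ∀ c : ℕ, #{j ∈ range tn | c.testBit j && z j} =
      (if c.testBit p && z p then 1 else 0) + ∑ j ∈ (range tn).erase p,
        if c.testBit j && z j then 1 else 0 := fun c => by
    rw [card_filter, ← add_sum_erase _ _ (mem_range.2 hp)]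
  have hrest : ∑ j ∈ (range tn).erase p, (if b'.testBit j && z j then 1 else 0) =
      ∑ j ∈ (range tn).erase p, (if b.testBit j && z j then 1 else 0) := by
    refine sum_congr rfl fun j hj => ?_
    obtain ⟨hjp, hj⟩ := mem_erase.1 hj
    cases hz : z j
    · simp
    · rw [hagree j (mem_range.1 hj) hjp hz]
  unfold hadF
  rw [hsplit b, hsplit b', hrest, hflip]
  generalize ∑ j ∈ (range tn).erase p, (if b.testBit j && z j then 1 else 0) = c
  rcases Nat.mod_two_eq_zero_or_one c with h | h <;>
    cases b.testBit p <;> cases z p <;> simp [Nat.add_mod, h]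

lemma paddedMsg_mul {t n : ℕ} (ht : 0 < t) (x : Fin n → Bool) (i : Fin n) :
    paddedMsg t n x (t * i) = x i := by
  have hdiv : t * i / t = i := Nat.mul_div_cancel_left _ ht
  simp [paddedMsg, hdiv]

lemma dvd_of_paddedMsg_eq_true {t n j : ℕ} {x : Fin n → Bool} (h : paddedMsg t n x j = true) :
    t ∣ j := by
  unfold paddedMsg at h
  split_ifs at h with hj
  exact Nat.dvd_of_mod_eq_zero hj.1

lemma xor_hadF_paddedMsg_add_two_pow {t n : ℕ} (ht : 0 < t) (x : Fin n → Bool) (i : Fin n)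
    {b : ℕ} (hb : goodFor t i b) :
    xor (hadF (t * n) (paddedMsg t n x) b)
      (hadF (t * n) (paddedMsg t n x) (b + 2 ^ (t * i))) = x i := by
  rw [← paddedMsg_mul ht x i]
  refine xor_hadF_of_testBit_flip (Nat.mul_lt_mul_left ht |>.2 i.2)
    (by rw [add_comm, Nat.testBit_two_pow_add_eq]) fun j _ hji hj => ?_
  obtain ⟨k, rfl⟩ := dvd_of_paddedMsg_eq_true hj
  refine Nat.testBit_add_two_pow_of_lt_or_le (goodFor_iff_div_mod_ne.1 hb) ?_
  rcases Nat.lt_or_gt_of_ne (fun h : k = i => hji (by rw [h])) with hk | hk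
  · exact .inl (Nat.mul_lt_mul_left ht |>.2 hk)
  · exact .inr (by rw [← mul_add_one]; exact Nat.mul_le_mul_left t hk)

lemma le_card_filter_shift_add (p : ℕ → Prop) [DecidablePred p] (L e : ℕ) :
    L ≤ #{a ∈ range (L - e) | p (a + e)} + e + #{b ∈ range L | ¬ p b} := by
  have hshift : #{a ∈ range (L - e) | ¬ p (a + e)} ≤ #{b ∈ range L | ¬ p b} :=
    card_le_card_of_injOn (· + e) (fun a ha => by
      simp only [coe_filter, mem_range, Set.mem_ofPred_eq] at ha ⊢
      exact ⟨by omega, ha.2⟩) (add_left_injective e).injOn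
  have hsplit := card_filter_add_card_filter_not (s := range (L - e)) (fun a => p (a + e))
  rw [card_range] at hsplit
  omega

lemma card_filter_range_mul_div_le (P : ℕ → Prop) [DecidablePred P] (B K : ℕ) :
    #{b ∈ range (B * K) | P (b / B)} ≤ B * #{c ∈ range K | P c} := by
  calc #{b ∈ range (B * K) | P (b / B)} ≤ #({c ∈ range K | P c} ×ˢ range B) := by
        refine card_le_card_of_injOn (fun b => (b / B, b % B)) (fun b hb => ?_)
          fun b _ b' _ h => ?_
        · simp only [coe_filter, mem_range, Set.mem_ofPred_eq, coe_product, Set.mem_prod,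
            coe_range, Set.mem_Iio] at hb ⊢
          have hB : 0 < B := Nat.pos_of_ne_zero (by rintro rfl; simp at hb)
          exact ⟨⟨Nat.div_lt_of_lt_mul hb.1, hb.2⟩, Nat.mod_lt b hB⟩
        · simp only [Prod.mk.injEq] at h
          rw [← Nat.div_add_mod b B, ← Nat.div_add_mod b' B, h.1, h.2]
    _ = B * #{c ∈ range K | P c} := by rw [card_product, card_range, mul_comm]

lemma card_filter_range_mod_eq_sub_one_le (m M : ℕ) :
    #{c ∈ range (m * M - 1) | c % m = m - 1} ≤ M - 1 := by
  rw [← card_range (M - 1)]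
  refine card_le_card_of_injOn (· / m) (fun c hc => ?_) fun c hc c' hc' h => ?_
  · simp only [coe_filter, mem_range, Set.mem_ofPred_eq, coe_range, Set.mem_Iio] at hc ⊢
    have hdm := Nat.div_add_mod c m
    have : m * (c / m + 1) < m * M := by rw [mul_add_one]; omega
    have := Nat.lt_of_mul_lt_mul_left this
    omega
  · simp only [coe_filter, mem_range, Set.mem_ofPred_eq] at hc hc'
    rw [← Nat.div_add_mod c m, ← Nat.div_add_mod c' m, hc.2, hc'.2]
    exact congrArg (m * · + (m - 1)) h

lemma two_pow_mul_card_filter_div_mod_add_le {s t u : ℕ} (h : s + t ≤ u) :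
    2 ^ t * (#{b ∈ range (2 ^ u - 2 ^ s) | b / 2 ^ s % 2 ^ t = 2 ^ t - 1} + 2 ^ s) ≤ 2 ^ u := by
  obtain ⟨r, rfl⟩ := Nat.exists_eq_add_of_le h
  have hr : 1 ≤ 2 ^ r := Nat.one_le_two_pow
  have hrange : 2 ^ (s + t + r) - 2 ^ s = 2 ^ s * (2 ^ t * 2 ^ r - 1) := by
    rw [Nat.mul_sub_one, pow_add, pow_add, mul_assoc]
  have hbad := (card_filter_range_mul_div_le (· % 2 ^ t = 2 ^ t - 1) (2 ^ s) _).trans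
    (Nat.mul_le_mul_left (2 ^ s) (card_filter_range_mod_eq_sub_one_le (2 ^ t) (2 ^ r)))
  rw [← hrange] at hbad
  calc 2 ^ t * (#{b ∈ range (2 ^ (s + t + r) - 2 ^ s) | b / 2 ^ s % 2 ^ t = 2 ^ t - 1} + 2 ^ s)
      ≤ 2 ^ t * (2 ^ s * (2 ^ r - 1) + 2 ^ s) := by gcongr
    _ = 2 ^ (s + t + r) := by
      rw [← mul_add_one, Nat.sub_add_cancel hr, pow_add, pow_add]; ring

lemma one_sub_sub_div_mul_le {m N B S e c δ : ℝ} (hm : 0 < m) (hδ : δ ≤ 1) (hB : 0 ≤ B)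
    (hpow : 2 * B ≤ N) (he : e ≤ δ * N) (hbad : m * (c + B) ≤ N)
    (hcount : N - B ≤ S + e + c) :
    (1 - δ - 2 / m) * (N - B) ≤ S := by
  have hc : c ≤ N / m - B := by
    rw [le_sub_iff_add_le, le_div_iff₀ hm, mul_comm]; exact hbad
  have hB2 : 2 * B / m ≤ N / m := div_le_div_of_nonneg_right hpow hm.le
  have hδB : δ * B ≤ B := mul_le_of_le_one_left hB hδ
  have hexpand : (1 - δ - 2 / m) * (N - B) = N - B - δ * N + δ * B - 2 * (N / m) + 2 * B / m := by
    ring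
  linarith

theorem padded_hadamard_decodes_prefix_deletions_general
    (t n : ℕ) (ht : 2 ≤ t) (δ : ℝ) (hδ : δ ∈ Set.Icc (0 : ℝ) 1)
    (x : Fin n → Bool) (i : Fin n) (e : ℕ) (he : (e : ℝ) ≤ δ * 2 ^ (t * n))
    (y : ℕ → Bool)
    (hy : ∀ a : ℕ, a + e ≤ 2 ^ (t * n) - 1 →
      y a = hadF (t * n) (paddedMsg t n x) (a + e)) :
    (1 - δ - 2 / 2 ^ t) * ((2 ^ (t * n) - 2 ^ (t * (i : ℕ)) : ℕ) : ℝ) ≤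
      (((Finset.range (2 ^ (t * n) - 2 ^ (t * (i : ℕ)))).filter
          (fun a => xor (y a) (y (a + 2 ^ (t * (i : ℕ)))) = x i)).card : ℝ) := by
  have ht0 : 0 < t := by omega
  have hblock : t * i + t ≤ t * n := by rw [← mul_add_one]; exact Nat.mul_le_mul_left t i.2
  have hpow : 2 * 2 ^ (t * i) ≤ 2 ^ (t * n) := by
    rw [← pow_succ']; exact Nat.pow_le_pow_right two_pos (by omega)
  have hdecoded : #{a ∈ range (2 ^ (t * n) - 2 ^ (t * i) - e) | goodFor t i (a + e)} ≤
      #{a ∈ range (2 ^ (t * n) - 2 ^ (t * i)) | xor (y a) (y (a + 2 ^ (t * i))) = x i} := by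
    refine card_le_card fun a ha => ?_
    simp only [mem_filter, mem_range] at ha ⊢
    refine ⟨by omega, ?_⟩
    rw [hy a (by omega), hy _ (by omega), add_right_comm]
    exact xor_hadF_paddedMsg_add_two_pow ht0 x i ha.2
  have hcount := le_card_filter_shift_add (goodFor t i) (2 ^ (t * n) - 2 ^ (t * i)) e
  have hbad := two_pow_mul_card_filter_div_mod_add_le hblock
  simp only [goodFor_iff_div_mod_ne, not_not] at hcount hdecoded
  have hcountR : ((2 ^ (t * n) - 2 ^ (t * i) : ℕ) : ℝ) ≤
      #{a ∈ range (2 ^ (t * n) - 2 ^ (t * i)) | xor (y a) (y (a + 2 ^ (t * i))) = x i} + e +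
        #{b ∈ range (2 ^ (t * n) - 2 ^ (t * i)) | b / 2 ^ (t * i) % 2 ^ t = 2 ^ t - 1} := by
    exact_mod_cast hcount.trans (by omega)
  rw [Nat.cast_sub (by omega)] at hcountR ⊢
  push_cast at hcountR ⊢
  exact one_sub_sub_div_mul_le (by positivity) hδ.2 (by positivity) (by exact_mod_cast hpow) he
    (by exact_mod_cast hbad) hcountR

/-- The padded Hadamard code locally decodes against prefix-deletion
(type-1) errors: if `y` agrees with the `e`-shifted codeword, i.e.
`y a = f_{x^(t)}(a + e)` whenever `a + e ≤ 2^(tn) − 1`, where `0 ≤ e ≤ δ·2^(tn)`, then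
for a uniformly random `a ∈ {0, …, 2^(tn) − 2^(ti) − 1}` the 2-query decoder output
`y(a) ⊕ y(a + 2^(ti))` equals `x i` with probability at least `1 − δ − 2^(−t+1)`; hence
this encoding is a `(2, δ, 1/2 − δ − 2^(−t+1))` locally decodable code against errors
that delete a prefix of at most `δ·2^(tn)` symbols and append arbitrary symbols. -/
theorem padded_hadamard_decodes_prefix_deletions
    (t n : ℕ) (ht : 2 ≤ t) (hn : 1 ≤ n) (δ : ℝ) (hδ : δ ∈ Set.Icc (0 : ℝ) 1)
    (x : Fin n → Bool) (i : Fin n) (e : ℕ) (he : (e : ℝ) ≤ δ * 2 ^ (t * n))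
    (y : ℕ → Bool)
    (hy : ∀ a : ℕ, a + e ≤ 2 ^ (t * n) - 1 →
      y a = hadF (t * n) (paddedMsg t n x) (a + e)) :
    (1 - δ - 2 / 2 ^ t) * ((2 ^ (t * n) - 2 ^ (t * (i : ℕ)) : ℕ) : ℝ) ≤
      (((Finset.range (2 ^ (t * n) - 2 ^ (t * (i : ℕ)))).filter
          (fun a => xor (y a) (y (a + 2 ^ (t * (i : ℕ)))) = x i)).card : ℝ) :=
  padded_hadamard_decodes_prefix_deletions_general t n ht δ hδ x i e he y hy
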